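/- arXiv:1909.09576 — 8 statements merged into one kernel-verified Lean document; each statement's English description precedes it below -/
import Mathlib

section
/- Let ξ_1, ..., ξ_n be independent real random variables and t ∈ ℝ. Then (1/2)·min(∑_{j=1}^n P(ξ_j > t), 1) ≤ P(max_{j≤n} ξ_j > t) ≤ ∑_{j=1}^n P(ξ_j > t). -/
open MeasureTheory ProbabilityTheory
open scoped ENNReal

/-!
By independence, `P(max_j ξ_j ≤ t) = ∏ j, (1 - p_j)` with `p_j = P(ξ_j > t)`, and
`∏ j, (1 - p_j) ≤ exp (-s) ≤ 1 / (1 + s)` for `s = ∑ j, p_j`.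
Hence `P(max_j ξ_j > t) ≥ s / (1 + s)`, which is at least `min s 1 / 2`.
The upper bound is the union bound.
-/

namespace Real

lemma div_one_add_le_one_sub_exp_neg {s : ℝ} (hs : 0 ≤ s) : s / (1 + s) ≤ 1 - exp (-s) := by
  have h : exp (-s) * (1 + s) ≤ 1 := by
    calc exp (-s) * (1 + s) ≤ exp (-s) * exp s := by gcongr; linarith [add_one_le_exp s]
      _ = 1 := by rw [← exp_add, neg_add_cancel, exp_zero]
  rw [div_le_iff₀ (by linarith)]
  linarith

lemma half_min_one_le_one_sub_exp_neg {s : ℝ} (hs : 0 ≤ s) : 1 / 2 * min s 1 ≤ 1 - exp (-s) := by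
  refine le_trans ?_ (div_one_add_le_one_sub_exp_neg hs)
  rw [le_div_iff₀ (by linarith)]
  rcases le_total s 1 with h | h
  · rw [min_eq_left h]; nlinarith
  · rw [min_eq_right h]; linarith

lemma prod_one_sub_le_exp_neg_sum {ι : Type*} (t : Finset ι) {q : ι → ℝ} (hq : ∀ i ∈ t, q i ≤ 1) :
    ∏ i ∈ t, (1 - q i) ≤ exp (-∑ i ∈ t, q i) := by
  rw [← Finset.sum_neg_distrib, exp_sum]
  exact Finset.prod_le_prod (fun i hi => sub_nonneg.2 (hq i hi)) fun i _ => one_sub_le_exp_neg _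

lemma half_min_sum_one_le_one_sub_prod {ι : Type*} (t : Finset ι) {q : ι → ℝ}
    (hq0 : ∀ i ∈ t, 0 ≤ q i) (hq1 : ∀ i ∈ t, q i ≤ 1) :
    1 / 2 * min (∑ i ∈ t, q i) 1 ≤ 1 - ∏ i ∈ t, (1 - q i) :=
  (half_min_one_le_one_sub_exp_neg (Finset.sum_nonneg hq0)).trans
    (by linarith [prod_one_sub_le_exp_neg_sum t hq1])

end Real

namespace ENNReal

lemma half_min_sum_one_le_one_sub_prod {ι : Type*} (t : Finset ι) {p : ι → ℝ≥0∞}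
    (hp : ∀ i ∈ t, p i ≤ 1) :
    1 / 2 * min (∑ i ∈ t, p i) 1 ≤ 1 - ∏ i ∈ t, (1 - p i) := by
  have hfin : ∀ i ∈ t, p i ≠ ∞ := fun i hi => ne_top_of_le_ne_top one_ne_top (hp i hi)
  have hprod : ∏ i ∈ t, (1 - p i) ≤ 1 := Finset.prod_le_one' fun i _ => tsub_le_self
  have hlhs : 1 / 2 * min (∑ i ∈ t, p i) 1 ≠ ∞ :=
    mul_ne_top (by norm_num) (ne_top_of_le_ne_top one_ne_top (min_le_right _ _))
  rw [← toReal_le_toReal hlhs (by finiteness), toReal_mul,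
    toReal_min (sum_ne_top.2 hfin) one_ne_top, toReal_sum hfin,
    toReal_sub_of_le hprod one_ne_top, toReal_prod, toReal_one]
  convert Real.half_min_sum_one_le_one_sub_prod t (q := fun i => (p i).toReal)
    (fun i _ => toReal_nonneg)
    (fun i hi => toReal_le_of_le_ofReal zero_le_one (by simpa using hp i hi))
    using 3 with i hi
  · norm_num
  · rw [toReal_sub_of_le (hp i hi) one_ne_top, toReal_one]

end ENNReal

lemma ProbabilityTheory.iIndep.measure_iUnion_eq_one_sub_prod {Ω ι : Type*} [Fintype ι]
    {m : ι → MeasurableSpace Ω} {mΩ : MeasurableSpace Ω} {μ : Measure Ω} [IsProbabilityMeasure μ]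
    (h : iIndep m μ) (hle : ∀ i, m i ≤ mΩ) {s : ι → Set Ω} (hs : ∀ i, MeasurableSet[m i] (s i)) :
    μ (⋃ i, s i) = 1 - ∏ i, (1 - μ (s i)) := by
  have hcompl : μ (⋃ i, s i)ᶜ = ∏ i, (1 - μ (s i)) := by
    rw [Set.compl_iUnion, h.meas_iInter fun i => (hs i).compl]
    exact Finset.prod_congr rfl fun i _ => prob_compl_eq_one_sub (hle i _ (hs i))
  rw [← hcompl, prob_compl_eq_one_sub (MeasurableSet.iUnion fun i => hle i _ (hs i)),
    ENNReal.sub_sub_cancel ENNReal.one_ne_top prob_le_one]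

/-- If `ξ 0, …, ξ (n-1)` are independent real random variables and `t ∈ ℝ`, then
`(1/2) · min (∑ j, P(ξ j > t)) 1 ≤ P(max_j ξ j > t) ≤ ∑ j, P(ξ j > t)`. -/
theorem stmt0 {Ω : Type*} [MeasureSpace Ω] [IsProbabilityMeasure (ℙ : Measure Ω)]
    {n : ℕ} (ξ : Fin n → Ω → ℝ) (hmeas : ∀ j, Measurable (ξ j))
    (hindep : iIndepFun (m := fun _ => Real.measurableSpace) ξ ℙ) (t : ℝ) :
    (1 / 2 : ℝ≥0∞) * min (∑ j, ℙ {ω | t < ξ j ω}) 1 ≤ ℙ {ω | ∃ j, t < ξ j ω} ∧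
      ℙ {ω | ∃ j, t < ξ j ω} ≤ ∑ j, ℙ {ω | t < ξ j ω} := by
  rw [Set.ofPred_exists]
  refine ⟨?_, measure_iUnion_fintype_le _ _⟩
  rw [hindep.iIndep.measure_iUnion_eq_one_sub_prod (s := fun j => {ω | t < ξ j ω})
    (fun j => (hmeas j).comap_le) fun j => ⟨Set.Ioi t, measurableSet_Ioi, rfl⟩]
  exact ENNReal.half_min_sum_one_le_one_sub_prod _ fun j _ => prob_le_one
end

section
/- Let Z_{n,k} = X_{n,k}·1_{|X_{n,k}|≤τ} − X'_{n,k}·1_{|X'_{n,k}|≤τ} where (X'_{n,k}) is an independent copy of the independent family (X_{n,k})_{k=0}^{k_n}, and let S̃_n = ∑_{k=0}^{k_n} Z_{n,k}. Then E S̃_n^4 ≤ 4τ² E S̃_n² + 3(E S̃_n²)². -/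
/-!
The truncated symmetrised variables `Z k` are independent, centred and bounded by `2τ`. For
independent, centred, bounded `T` and `W`, every cross term of `(T + W)ⁿ` containing a first power
of `T` or of `W` has mean zero, so `E (T + W)² = E T² + E W²` and
`E (T + W)⁴ = E T⁴ + 6 E T² E W² + E W⁴`; moreover `E W⁴ ≤ c² E W²` when `|W| ≤ c`. Adding the
`Z k` one at a time therefore preserves `E S⁴ ≤ c² E S² + 3 (E S²)²`.
-/

open MeasureTheory ProbabilityTheory
open scoped ENNReal

namespace MeasureTheory

variable {Ω : Type*} [MeasurableSpace Ω] {μ : Measure Ω}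

lemma MemLp.pow_top {f : Ω → ℝ} (hf : MemLp f ∞ μ) (n : ℕ) : MemLp (f ^ n) ∞ μ := by
  induction n with
  | zero => rw [pow_zero]; exact memLp_top_const 1
  | succ n ih => rw [pow_succ]; exact hf.mul ih

lemma integral_pow_four_le_of_abs_le [IsFiniteMeasure μ] {f : Ω → ℝ} {c : ℝ}
    (hf : AEStronglyMeasurable f μ) (hfc : ∀ᵐ ω ∂μ, |f ω| ≤ c) :
    ∫ ω, f ω ^ 4 ∂μ ≤ c ^ 2 * ∫ ω, f ω ^ 2 ∂μ := by
  have hf_top : MemLp f ∞ μ := memLp_top_of_bound hf c (by simpa using hfc)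
  rw [← integral_const_mul]
  refine integral_mono_ae ((hf_top.pow_top 4).integrable le_top)
    (((hf_top.pow_top 2).integrable le_top).const_mul _) ?_
  filter_upwards [hfc] with ω hω
  have hsq : f ω ^ 2 ≤ c ^ 2 := sq_le_sq' (abs_le.mp hω).1 (abs_le.mp hω).2
  nlinarith [sq_nonneg (f ω)]

end MeasureTheory

namespace ProbabilityTheory

variable {Ω : Type*} [MeasurableSpace Ω] {μ : Measure Ω}

lemma IndepFun.integral_add_pow [IsFiniteMeasure μ] {T W : Ω → ℝ} (hTW : IndepFun T W μ)
    (hT : MemLp T ∞ μ) (hW : MemLp W ∞ μ) (n : ℕ) :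
    ∫ ω, (T ω + W ω) ^ n ∂μ =
      ∑ i ∈ Finset.range (n + 1), (∫ ω, T ω ^ i ∂μ) * (∫ ω, W ω ^ (n - i) ∂μ) * n.choose i := by
  simp_rw [add_pow]
  rw [integral_finsetSum _ fun i _ => by
    exact (((hW.pow_top (n - i)).mul (hT.pow_top i)).integrable le_top).mul_const _]
  refine Finset.sum_congr rfl fun i _ => ?_
  rw [integral_mul_const]
  congr 1
  exact (hTW.comp (measurable_id.pow_const i) (measurable_id.pow_const (n - i)))
    |>.integral_fun_mul_eq_mul_integral (hT.pow_top i).aestronglyMeasurable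
      (hW.pow_top (n - i)).aestronglyMeasurable

lemma iIndepFun.indepFun_finsetSum_comp_sumElim {ι β : Type*} [MeasurableSpace β]
    {X X' : ι → Ω → β} (h : iIndepFun (Sum.elim X X') μ) (hX : ∀ k, Measurable (X k))
    (hX' : ∀ k, Measurable (X' k)) {g : β → β → ℝ} (hg : Measurable (Function.uncurry g))
    {s : Finset ι} {a : ι} (ha : a ∉ s) :
    IndepFun (fun ω => ∑ k ∈ s, g (X k ω) (X' k ω)) (fun ω => g (X a ω) (X' a ω)) μ := by
  have hdisj : Disjoint (s.disjSum s) (({a} : Finset ι).disjSum {a}) := by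
    grind [Finset.disjoint_left, Finset.mem_disjSum]
  have hblock := h.indepFun_finset _ _ hdisj (Sum.forall.2 ⟨hX, hX'⟩)
  have hpair {t : Finset (ι ⊕ ι)} {k : ι} (hl : Sum.inl k ∈ t) (hr : Sum.inr k ∈ t) :
      Measurable fun v : t → β => g (v ⟨_, hl⟩) (v ⟨_, hr⟩) :=
    hg.comp (f := fun v : t → β => (v ⟨_, hl⟩, v ⟨_, hr⟩))
      ((measurable_pi_apply _).prodMk (measurable_pi_apply _))
  convert hblock.comp (Finset.measurable_sum s.attach fun k _ =>
      hpair (Finset.inl_mem_disjSum.2 k.2) (Finset.inr_mem_disjSum.2 k.2))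
    (hpair (Finset.inl_mem_disjSum.2 (Finset.mem_singleton_self a))
      (Finset.inr_mem_disjSum.2 (Finset.mem_singleton_self a))) using 1
  · funext ω
    exact (Finset.sum_attach s fun k => g (X k ω) (X' k ω)).symm
  · rfl

variable [IsProbabilityMeasure μ] {T W : Ω → ℝ}

lemma IndepFun.integral_add_sq (hTW : IndepFun T W μ) (hT : MemLp T ∞ μ) (hW : MemLp W ∞ μ)
    (hW0 : ∫ ω, W ω ∂μ = 0) :
    ∫ ω, (T ω + W ω) ^ 2 ∂μ = ∫ ω, T ω ^ 2 ∂μ + ∫ ω, W ω ^ 2 ∂μ := by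
  simp [hTW.integral_add_pow hT hW, Finset.sum_range_succ, hW0, add_comm]

lemma IndepFun.integral_add_pow_four (hTW : IndepFun T W μ) (hT : MemLp T ∞ μ)
    (hW : MemLp W ∞ μ) (hT0 : ∫ ω, T ω ∂μ = 0) (hW0 : ∫ ω, W ω ∂μ = 0) :
    ∫ ω, (T ω + W ω) ^ 4 ∂μ =
      ∫ ω, T ω ^ 4 ∂μ + 6 * (∫ ω, T ω ^ 2 ∂μ) * (∫ ω, W ω ^ 2 ∂μ) + ∫ ω, W ω ^ 4 ∂μ := by
  rw [hTW.integral_add_pow hT hW]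
  norm_num [Finset.sum_range_succ, Nat.choose, hT0, hW0]
  ring

theorem integral_finsetSum_pow_four_le {ι : Type*} {Z : ι → Ω → ℝ} {c : ℝ}
    (hZ : ∀ k, AEStronglyMeasurable (Z k) μ) (hZc : ∀ k, ∀ᵐ ω ∂μ, |Z k ω| ≤ c)
    (hZ0 : ∀ k, ∫ ω, Z k ω ∂μ = 0)
    (hindep : ∀ (s : Finset ι) (a : ι), a ∉ s → IndepFun (fun ω => ∑ k ∈ s, Z k ω) (Z a) μ)
    (s : Finset ι) :
    ∫ ω, (∑ k ∈ s, Z k ω) ^ 4 ∂μ ≤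
      c ^ 2 * ∫ ω, (∑ k ∈ s, Z k ω) ^ 2 ∂μ + 3 * (∫ ω, (∑ k ∈ s, Z k ω) ^ 2 ∂μ) ^ 2 := by
  classical
  have hZ_top : ∀ k, MemLp (Z k) ∞ μ := fun k =>
    memLp_top_of_bound (hZ k) c (by simpa using hZc k)
  induction s using Finset.induction_on with
  | empty => simp
  | @insert a s ha ih =>
    have hsum_top : MemLp (fun ω => ∑ k ∈ s, Z k ω) ∞ μ := memLp_finsetSum s fun k _ => hZ_top k
    have hsum0 : ∫ ω, ∑ k ∈ s, Z k ω ∂μ = 0 := by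
      rw [integral_finsetSum s fun k _ => (hZ_top k).integrable le_top]
      exact Finset.sum_eq_zero fun k _ => hZ0 k
    simp only [Finset.sum_insert ha, add_comm (Z a _)]
    rw [(hindep s a ha).integral_add_pow_four hsum_top (hZ_top a) hsum0 (hZ0 a),
      (hindep s a ha).integral_add_sq hsum_top (hZ_top a) (hZ0 a)]
    nlinarith [integral_pow_four_le_of_abs_le (hZ a) (hZc a), sq_nonneg (∫ ω, Z a ω ^ 2 ∂μ)]

end ProbabilityTheory

noncomputable def truncAt (τ x : ℝ) : ℝ := if |x| ≤ τ then x else 0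

lemma measurable_truncAt (τ : ℝ) : Measurable (truncAt τ) :=
  .ite (measurableSet_le measurable_id.abs measurable_const) measurable_id measurable_const

lemma abs_truncAt_le {τ : ℝ} (hτ : 0 ≤ τ) (x : ℝ) : |truncAt τ x| ≤ τ := by
  unfold truncAt
  split_ifs with hx
  · exact hx
  · simpa using hτ

/-- For a row of a triangular array: `X 0, …, X m` independent, `X'` an independent copy of
this family, `Z k = X k · 1_{|X k| ≤ τ} − X' k · 1_{|X' k| ≤ τ}`, `S = ∑ Z k`. Then
`E S⁴ ≤ 4 τ² E S² + 3 (E S²)²`. -/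
theorem stmt1 {Ω : Type*} [MeasureSpace Ω] [IsProbabilityMeasure (ℙ : Measure Ω)]
    {m : ℕ} (τ : ℝ) (hτ : 0 < τ) (X X' : Fin m → Ω → ℝ)
    (hmeas : ∀ k, Measurable (X k)) (hmeas' : ∀ k, Measurable (X' k))
    -- the 2m variables (the X's together with the X''s) are jointly independent
    (hindep : iIndepFun (Sum.elim X X' : Fin m ⊕ Fin m → Ω → ℝ) ℙ)
    -- X' is a copy of X
    (hcopy : ∀ k, Measure.map (X' k) ℙ = Measure.map (X k) ℙ)
    (Z : Fin m → Ω → ℝ)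
    (hZ : ∀ k ω, Z k ω =
      (if |X k ω| ≤ τ then X k ω else 0) - (if |X' k ω| ≤ τ then X' k ω else 0))
    (S : Ω → ℝ) (hS : ∀ ω, S ω = ∑ k, Z k ω) :
    ∫ ω, (S ω) ^ 4 ∂ℙ ≤ 4 * τ ^ 2 * ∫ ω, (S ω) ^ 2 ∂ℙ + 3 * (∫ ω, (S ω) ^ 2 ∂ℙ) ^ 2 := by
  obtain rfl : S = fun ω => ∑ k, Z k ω := funext hS
  obtain rfl : Z = fun k ω => truncAt τ (X k ω) - truncAt τ (X' k ω) :=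
    funext fun k => funext (hZ k)
  have htrunc_int {f : Ω → ℝ} (hf : Measurable f) : Integrable (fun ω => truncAt τ (f ω)) ℙ :=
    .of_bound ((measurable_truncAt τ).comp hf).aestronglyMeasurable τ
      (.of_forall fun ω => abs_truncAt_le hτ.le (f ω))
  have hZ_meas k : AEStronglyMeasurable (fun ω => truncAt τ (X k ω) - truncAt τ (X' k ω)) ℙ :=
    (htrunc_int (hmeas k)).1.sub (htrunc_int (hmeas' k)).1
  have hZ_bound k : ∀ᵐ ω ∂ℙ, |truncAt τ (X k ω) - truncAt τ (X' k ω)| ≤ 2 * τ :=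
    .of_forall fun ω => (abs_sub _ _).trans
      (by linarith [abs_truncAt_le hτ.le (X k ω), abs_truncAt_le hτ.le (X' k ω)])
  have hZ_mean k : ∫ ω, truncAt τ (X k ω) - truncAt τ (X' k ω) ∂ℙ = 0 := by
    have hcopy_k : IdentDistrib (X' k) (X k) ℙ ℙ :=
      ⟨(hmeas' k).aemeasurable, (hmeas k).aemeasurable, hcopy k⟩
    rw [integral_sub (htrunc_int (hmeas k)) (htrunc_int (hmeas' k))]
    exact sub_eq_zero.2 (hcopy_k.comp (measurable_truncAt τ)).integral_eq.symm
  have hZ_indep (s : Finset (Fin m)) (a : Fin m) (ha : a ∉ s) :=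
    hindep.indepFun_finsetSum_comp_sumElim hmeas hmeas' (g := fun x y => truncAt τ x - truncAt τ y)
      (((measurable_truncAt τ).comp measurable_fst).sub
        ((measurable_truncAt τ).comp measurable_snd)) ha
  calc _ ≤ (2 * τ) ^ 2 * _ + 3 * _ :=
        integral_finsetSum_pow_four_le hZ_meas hZ_bound hZ_mean hZ_indep _
    _ = _ := by ring
end

section
/- Let (S_n) be a sequence of real random variables with E S_n^4 ≤ 4τ² E S_n² + 3(E S_n²)² for a fixed τ > 0, E S_n² < ∞, and suppose S_n → 0 in probability. Then E S_n² → 0. -/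
open MeasureTheory ProbabilityTheory Filter
open scoped ENNReal
open Topology

/-!
On `{|f| < c}` we have `f² < c²`, while on `{|f| ≥ c}` Cauchy–Schwarz bounds `E[f²; |f| ≥ c]` by
`√(E f⁴ · P(|f| ≥ c))`. Under `E f⁴ ≤ K E f² + 3 (E f²)²` and `P(|f| ≥ c) ≤ 1/12` this square
root can be absorbed into the left-hand side, giving `E f² ≤ 4c² + 4K P(|f| ≥ c)` (a quantitative
form of the Paley–Zygmund inequality). Convergence in probability makes the right-hand side
smaller than any `ε` for large `n`.
-/

section

variable {Ω : Type*} {mΩ : MeasurableSpace Ω} {μ : Measure Ω} {f : Ω → ℝ}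

lemma memLp_two_sq_of_memLp_four (hf : MemLp f 4 μ) : MemLp (fun ω ↦ f ω ^ 2) 2 μ := by
  refine (memLp_two_iff_integrable_sq (hf.1.pow 2)).2 ?_
  simpa [← pow_mul, Even.pow_abs (by decide : Even 4)] using
    hf.integrable_norm_pow (p := 4) (by norm_num)

lemma setIntegral_sq_le_sqrt_integral_pow_four_mul (hf : MemLp f 4 μ) {A : Set Ω}
    (hA : MeasurableSet A) (hμA : μ A ≠ ∞) :
    ∫ ω in A, f ω ^ 2 ∂μ ≤ √((∫ ω, f ω ^ 4 ∂μ) * μ.real A) := by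
  have h1 : MemLp (A.indicator fun _ ↦ (1 : ℝ)) (ENNReal.ofReal 2) μ := by
    simpa using memLp_indicator_const 2 hA 1 (Or.inr hμA)
  have := integral_mul_le_Lp_mul_Lq_of_nonneg Real.HolderConjugate.two_two
    (.of_forall fun ω ↦ sq_nonneg (f ω)) (.of_forall (Set.indicator_nonneg fun _ _ ↦ zero_le_one))
    (by simpa using memLp_two_sq_of_memLp_four hf) h1
  have hmul : (fun ω ↦ f ω ^ 2 * A.indicator (fun _ ↦ (1 : ℝ)) ω) =
      A.indicator (fun ω ↦ f ω ^ 2) := by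
    ext ω; by_cases hω : ω ∈ A <;> simp [hω]
  have hsq : (fun ω ↦ A.indicator (fun _ ↦ (1 : ℝ)) ω ^ (2 : ℝ)) = A.indicator 1 := by
    ext ω; by_cases hω : ω ∈ A <;> simp [hω]
  rw [hmul, integral_indicator hA, hsq, integral_indicator_one hA] at this
  refine this.trans_eq ?_
  rw [Real.sqrt_eq_rpow, Real.mul_rpow (integral_nonneg fun ω ↦ by positivity) measureReal_nonneg]
  simp_rw [Real.rpow_two, ← pow_mul]

lemma le_four_mul_sq_add_of_le_sq_add_sqrt {m c K P : ℝ} (hm : 0 ≤ m) (hK : 0 ≤ K)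
    (hP : 0 ≤ P) (hP' : P ≤ 1 / 12) (h : m ≤ c ^ 2 + √((K * m + 3 * m ^ 2) * P)) :
    m ≤ 4 * c ^ 2 + 4 * K * P := by
  set s := √((K * m + 3 * m ^ 2) * P)
  have hs : s ^ 2 = (K * m + 3 * m ^ 2) * P := Real.sq_sqrt (by positivity)
  -- Otherwise `s > 3m/4 + KP`, and squaring contradicts `s² ≤ KmP + m²/4`.
  by_contra! hlt
  have hts : 3 * m / 4 + K * P < s := by nlinarith [sq_nonneg c]
  nlinarith [mul_self_lt_mul_self (by positivity) hts, mul_le_mul_of_nonneg_left hP' (sq_nonneg m),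
    mul_nonneg (mul_nonneg hm hK) hP]

lemma integral_sq_le_sq_add_sqrt_integral_pow_four_mul [IsProbabilityMeasure μ]
    (hfm : Measurable f) (hf : MemLp f 4 μ) (c : ℝ) :
    ∫ ω, f ω ^ 2 ∂μ ≤ c ^ 2 + √((∫ ω, f ω ^ 4 ∂μ) * μ.real {ω | c ≤ |f ω|}) := by
  set A := {ω | c ≤ |f ω|}
  have hA : MeasurableSet A := measurableSet_le measurable_const hfm.abs
  have hf2 : Integrable (fun ω ↦ f ω ^ 2) μ :=
    (memLp_two_sq_of_memLp_four hf).integrable one_le_two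
  have hpt : ∀ ω, f ω ^ 2 ≤ c ^ 2 + A.indicator (fun ω ↦ f ω ^ 2) ω := by
    intro ω
    by_cases hω : ω ∈ A
    · simp [hω, sq_nonneg c]
    · have hlt : |f ω| < c := not_le.1 hω
      rw [Set.indicator_of_notMem hω, add_zero, ← sq_abs]
      exact pow_le_pow_left₀ (abs_nonneg _) hlt.le 2
  calc ∫ ω, f ω ^ 2 ∂μ ≤ ∫ ω, (c ^ 2 + A.indicator (fun ω ↦ f ω ^ 2) ω) ∂μ :=
        integral_mono hf2 ((integrable_const _).add (hf2.indicator hA)) hpt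
    _ = c ^ 2 + ∫ ω in A, f ω ^ 2 ∂μ := by
        rw [integral_add (integrable_const _) (hf2.indicator hA), integral_indicator hA]
        simp
    _ ≤ _ := by
        gcongr
        exact setIntegral_sq_le_sqrt_integral_pow_four_mul hf hA (measure_ne_top _ _)

lemma integral_sq_le_of_integral_pow_four_le [IsProbabilityMeasure μ] (hfm : Measurable f)
    (hf : MemLp f 4 μ) {K : ℝ} (hK : 0 ≤ K)
    (hmom : ∫ ω, f ω ^ 4 ∂μ ≤ K * ∫ ω, f ω ^ 2 ∂μ + 3 * (∫ ω, f ω ^ 2 ∂μ) ^ 2) {c : ℝ}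
    (hsmall : μ.real {ω | c ≤ |f ω|} ≤ 1 / 12) :
    ∫ ω, f ω ^ 2 ∂μ ≤ 4 * c ^ 2 + 4 * K * μ.real {ω | c ≤ |f ω|} := by
  refine le_four_mul_sq_add_of_le_sq_add_sqrt (integral_nonneg fun ω ↦ sq_nonneg _) hK
    measureReal_nonneg hsmall ?_
  refine (integral_sq_le_sq_add_sqrt_integral_pow_four_mul hfm hf c).trans ?_
  gcongr

end

theorem stmt2_general {Ω : Type*} [MeasureSpace Ω] [IsProbabilityMeasure (ℙ : Measure Ω)]
    (S : ℕ → Ω → ℝ) (τ : ℝ)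
    (hmeas : ∀ n, Measurable (S n))
    (hL4 : ∀ n, MemLp (S n) 4 ℙ)
    (hmom : ∀ n, ∫ ω, (S n ω) ^ 4 ∂ℙ ≤
      4 * τ ^ 2 * ∫ ω, (S n ω) ^ 2 ∂ℙ + 3 * (∫ ω, (S n ω) ^ 2 ∂ℙ) ^ 2)
    (hprob : TendstoInMeasure ℙ S atTop (0 : Ω → ℝ)) :
    Tendsto (fun n => ∫ ω, (S n ω) ^ 2 ∂ℙ) atTop (nhds 0) := by
  have hP : ∀ c > 0, Tendsto (fun n ↦ (ℙ : Measure Ω).real {ω | c ≤ |S n ω|}) atTop (𝓝 0) := by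
    simpa using tendstoInMeasure_iff_measureReal_norm.1 hprob
  refine tendsto_order.2 ⟨fun a ha ↦ .of_forall fun n ↦
    ha.trans_le (integral_nonneg fun ω ↦ sq_nonneg _), fun ε hε ↦ ?_⟩
  obtain ⟨c, hc, hcε⟩ : ∃ c > 0, 4 * c ^ 2 < ε :=
    ⟨√(ε / 8), by positivity, by rw [Real.sq_sqrt (by positivity)]; linarith⟩
  have hbound : Tendsto
      (fun n ↦ 4 * c ^ 2 + 4 * (4 * τ ^ 2) * (ℙ : Measure Ω).real {ω | c ≤ |S n ω|})
      atTop (𝓝 (4 * c ^ 2)) := by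
    simpa using ((hP c hc).const_mul (4 * (4 * τ ^ 2))).const_add (4 * c ^ 2)
  filter_upwards [(hP c hc).eventually (ge_mem_nhds (by norm_num : (0 : ℝ) < 1 / 12)),
    hbound.eventually (gt_mem_nhds hcε)] with n hsmall hlt
  exact (integral_sq_le_of_integral_pow_four_le (hmeas n) (hL4 n) (by positivity) (hmom n)
    hsmall).trans_lt hlt

/-- If `E Sₙ⁴ ≤ 4τ² E Sₙ² + 3 (E Sₙ²)²` for a fixed `τ > 0`, the `Sₙ` have finite fourth
moments, and `Sₙ → 0` in probability, then `E Sₙ² → 0`. -/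
theorem stmt2 {Ω : Type*} [MeasureSpace Ω] [IsProbabilityMeasure (ℙ : Measure Ω)]
    (S : ℕ → Ω → ℝ) (τ : ℝ) (hτ : 0 < τ)
    (hmeas : ∀ n, Measurable (S n))
    (hL4 : ∀ n, MemLp (S n) 4 ℙ)
    (hmom : ∀ n, ∫ ω, (S n ω) ^ 4 ∂ℙ ≤
      4 * τ ^ 2 * ∫ ω, (S n ω) ^ 2 ∂ℙ + 3 * (∫ ω, (S n ω) ^ 2 ∂ℙ) ^ 2)
    (hprob : TendstoInMeasure ℙ S atTop (0 : Ω → ℝ)) :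
    Tendsto (fun n => ∫ ω, (S n ω) ^ 2 ∂ℙ) atTop (nhds 0) :=
  stmt2_general S τ hmeas hL4 hmom hprob
end

section
/- Let X_{n,k}, n ∈ ℕ, k ∈ {0,...,k_n} be a triangular array such that for each n the variables X_{n,0},...,X_{n,k_n} are independent, and fix τ > 0. If ∑_{k=0}^{k_n} E[X_{n,k}·1_{|X_{n,k}|≤τ}] → 1 and ∑_{k=0}^{k_n}(P(|X_{n,k}| > τ) + Var(X_{n,k}·1_{|X_{n,k}|≤τ})) → 0 as n → ∞, then ∑_{k=0}^{k_n} X_{n,k} converges in probability to 1. -/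
open MeasureTheory ProbabilityTheory Filter
open scoped ENNReal

/-!
Truncate each `X n i` at level `τ`. The truncated row sum `Tₙ` has mean
`∑ E[X_{n,i} 1_{|X_{n,i}|≤τ}] → 1` and, by independence, variance `∑ Var(X_{n,i} 1_{|X_{n,i}|≤τ}) → 0`,
so `Tₙ → 1` in probability by Chebyshev. The untruncated row sum differs from `Tₙ` only on
`⋃ᵢ {τ < |X_{n,i}|}`, whose probability is at most `∑ P(|X_{n,i}| > τ) → 0`.
-/

theorem tendsto_zero_and_tendsto_zero_of_add {ι : Type*} {l : Filter ι} {f g : ι → ℝ}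
    (hf : ∀ i, 0 ≤ f i) (hg : ∀ i, 0 ≤ g i) (h : Tendsto (fun i => f i + g i) l (nhds 0)) :
    Tendsto f l (nhds 0) ∧ Tendsto g l (nhds 0) :=
  ⟨squeeze_zero hf (fun i => le_add_of_nonneg_right (hg i)) h,
    squeeze_zero hg (fun i => le_add_of_nonneg_left (hf i)) h⟩

namespace MeasureTheory.TendstoInMeasure

variable {α ι E : Type*} [MeasurableSpace α] {μ : Measure α} {l : Filter ι} [EDist E]

theorem of_tendsto_measure_ne {f g : ι → α → E} {h : α → E} (hg : TendstoInMeasure μ g l h)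
    (hfg : Tendsto (fun i => μ {x | f i x ≠ g i x}) l (nhds 0)) :
    TendstoInMeasure μ f l h := by
  intro ε hε
  have hsub : ∀ i, {x | ε ≤ edist (f i x) (h x)} ⊆
      {x | f i x ≠ g i x} ∪ {x | ε ≤ edist (g i x) (h x)} := by
    intro i x hx
    by_cases hx' : f i x = g i x
    · exact Or.inr (by simpa [hx'] using hx)
    · exact Or.inl hx'
  refine tendsto_of_tendsto_of_tendsto_of_le_of_le tendsto_const_nhds
    (by simpa using hfg.add (hg ε hε)) (fun _ => zero_le) fun i => ?_
  exact (measure_mono (hsub i)).trans (measure_union_le _ _)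

end MeasureTheory.TendstoInMeasure

namespace ProbabilityTheory

variable {Ω ι : Type*} [MeasurableSpace Ω] {μ : Measure Ω} {l : Filter ι}

theorem tendstoInMeasure_const_of_tendsto_integral_of_tendsto_variance [IsFiniteMeasure μ]
    {Y : ι → Ω → ℝ} {c : ℝ}
    (hY : ∀ i, MemLp (Y i) 2 μ) (hmean : Tendsto (fun i => μ[Y i]) l (nhds c))
    (hvar : Tendsto (fun i => variance (Y i) μ) l (nhds 0)) :
    TendstoInMeasure μ Y l (fun _ => c) := by
  rw [tendstoInMeasure_iff_dist]
  intro ε hε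
  have hε2 : 0 < ε / 2 := half_pos hε
  have hbound : Tendsto (fun i => ENNReal.ofReal (variance (Y i) μ / (ε / 2) ^ 2)) l (nhds 0) := by
    simpa using ENNReal.tendsto_ofReal (hvar.div_const ((ε / 2) ^ 2))
  refine tendsto_of_tendsto_of_tendsto_of_le_of_le' tendsto_const_nhds hbound
    (Eventually.of_forall fun _ => zero_le) ?_
  -- once `|μ[Y i] - c| < ε / 2`, deviating by `ε` from `c` forces deviating by `ε / 2` from the mean
  filter_upwards [Metric.tendsto_nhds.mp hmean (ε / 2) hε2] with i hi
  refine (measure_mono fun ω hω => ?_).trans (meas_ge_le_variance_div_sq (hY i) hε2)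
  have htri := abs_sub_le (Y i ω) μ[Y i] c
  rw [Real.dist_eq] at hi
  simp only [Set.mem_ofPred_eq, Real.dist_eq] at hω ⊢
  linarith

theorem iIndepFun.pairwise_indepFun_range {β : Type*} [MeasurableSpace β] {m : ℕ}
    {X : ℕ → Ω → β} (h : iIndepFun (fun i : Fin m => X i) μ) :
    Set.Pairwise ↑(Finset.range m) fun i j => IndepFun (X i) (X j) μ := by
  intro i hi j hj hij
  exact h.indepFun (i := ⟨i, Finset.mem_range.mp hi⟩) (j := ⟨j, Finset.mem_range.mp hj⟩)
    (by simpa [Fin.ext_iff] using hij)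

end ProbabilityTheory

noncomputable def truncAbs (τ x : ℝ) : ℝ := if |x| ≤ τ then x else 0

theorem measurable_truncAbs (τ : ℝ) : Measurable (truncAbs τ) :=
  Measurable.ite (measurableSet_le measurable_id.abs measurable_const) measurable_id
    measurable_const

theorem abs_truncAbs_le_abs (τ x : ℝ) : |truncAbs τ x| ≤ |τ| := by
  unfold truncAbs
  split_ifs with h
  · exact h.trans (le_abs_self τ)
  · simp

theorem truncAbs_of_abs_le {τ x : ℝ} (h : |x| ≤ τ) : truncAbs τ x = x := if_pos h

section

variable {Ω ι : Type*} [MeasurableSpace Ω] {μ : Measure Ω}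

theorem memLp_truncAbs_comp [IsFiniteMeasure μ] {f : Ω → ℝ} (hf : AEMeasurable f μ) (τ : ℝ)
    (p : ℝ≥0∞) : MemLp (fun ω => truncAbs τ (f ω)) p μ :=
  MemLp.of_bound ((measurable_truncAbs τ).comp_aemeasurable hf).aestronglyMeasurable |τ|
    (ae_of_all _ fun ω => abs_truncAbs_le_abs τ (f ω))

theorem measure_sum_ne_sum_truncAbs_le (s : Finset ι) (f : ι → Ω → ℝ) (τ : ℝ) :
    μ {ω | ∑ i ∈ s, f i ω ≠ ∑ i ∈ s, truncAbs τ (f i ω)} ≤ ∑ i ∈ s, μ {ω | τ < |f i ω|} := by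
  refine (measure_mono fun ω hω => ?_).trans (measure_biUnion_finset_le s _)
  contrapose hω
  simp only [Set.mem_iUnion, Set.mem_ofPred_eq, not_exists, not_lt] at hω
  exact not_not.mpr (Finset.sum_congr rfl fun i hi => (truncAbs_of_abs_le (hω i hi)).symm)

end

theorem stmt4_general {Ω : Type*} [MeasureSpace Ω] [IsProbabilityMeasure (ℙ : Measure Ω)]
    (k : ℕ → ℕ) (X : ℕ → ℕ → Ω → ℝ)
    (hmeas : ∀ n i, Measurable (X n i))
    (hindep : ∀ n, iIndepFun (m := fun _ => Real.measurableSpace)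
      (fun i : Fin (k n + 1) => X n i) ℙ)
    (τ : ℝ)
    (h1 : Tendsto (fun n => ∑ i ∈ Finset.range (k n + 1),
      ∫ ω, (if |X n i ω| ≤ τ then X n i ω else 0) ∂ℙ) atTop (nhds 1))
    (h2 : Tendsto (fun n => ∑ i ∈ Finset.range (k n + 1),
      ((ℙ {ω | τ < |X n i ω|}).toReal +
        variance (fun ω => if |X n i ω| ≤ τ then X n i ω else 0) ℙ)) atTop (nhds 0)) :
    TendstoInMeasure ℙ (fun n ω => ∑ i ∈ Finset.range (k n + 1), X n i ω) atTop
      (fun _ => (1 : ℝ)) := by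
  set Y : ℕ → ℕ → Ω → ℝ := fun n i ω => truncAbs τ (X n i ω)
  have hY : ∀ n i, MemLp (Y n i) 2 ℙ := fun n i =>
    memLp_truncAbs_comp (hmeas n i).aemeasurable τ 2
  have hmean : ∀ n, ℙ[∑ i ∈ Finset.range (k n + 1), Y n i]
      = ∑ i ∈ Finset.range (k n + 1), ℙ[Y n i] := fun n => by
    simp only [Finset.sum_apply]
    exact integral_finsetSum _ fun i _ => (hY n i).integrable one_le_two
  have hvar : ∀ n, variance (∑ i ∈ Finset.range (k n + 1), Y n i) ℙ
      = ∑ i ∈ Finset.range (k n + 1), variance (Y n i) ℙ := fun n =>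
    IndepFun.variance_sum (fun i _ => hY n i) fun i hi j hj hij =>
      ((hindep n).pairwise_indepFun_range hi hj hij).comp (measurable_truncAbs τ)
        (measurable_truncAbs τ)
  have hmean1 : Tendsto (fun n => ℙ[∑ i ∈ Finset.range (k n + 1), Y n i]) atTop (nhds 1) := by
    rw [funext hmean]
    exact h1
  obtain ⟨htail, hvar0⟩ := tendsto_zero_and_tendsto_zero_of_add
    (f := fun n => ∑ i ∈ Finset.range (k n + 1), (ℙ {ω | τ < |X n i ω|}).toReal)
    (g := fun n => variance (∑ i ∈ Finset.range (k n + 1), Y n i) ℙ)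
    (fun n => Finset.sum_nonneg fun i _ => ENNReal.toReal_nonneg)
    (fun n => variance_nonneg _ _)
    (by simp only [hvar, ← Finset.sum_add_distrib]; exact h2)
  refine (tendstoInMeasure_const_of_tendsto_integral_of_tendsto_variance
    (fun n => memLp_finsetSum' _ fun i _ => hY n i) hmean1 hvar0).of_tendsto_measure_ne ?_
  simp only [Finset.sum_apply]
  refine tendsto_of_tendsto_of_tendsto_of_le_of_le tendsto_const_nhds ?_ (fun _ => zero_le)
    fun n => measure_sum_ne_sum_truncAbs_le _ (X n) τ
  rwa [← ENNReal.tendsto_toReal_zero_iff fun n => ENNReal.sum_ne_top.mpr fun i _ =>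
    measure_ne_top _ _, funext fun n => ENNReal.toReal_sum fun i _ => measure_ne_top _ _]

/-- Sufficiency part of the weak law for triangular arrays: if
`∑_{k≤kₙ} E[X_{n,k} 1_{|X_{n,k}|≤τ}] → 1` and
`∑_{k≤kₙ} (P(|X_{n,k}| > τ) + Var(X_{n,k} 1_{|X_{n,k}|≤τ})) → 0`,
then `∑_{k≤kₙ} X_{n,k} → 1` in probability. -/
theorem stmt4 {Ω : Type*} [MeasureSpace Ω] [IsProbabilityMeasure (ℙ : Measure Ω)]
    (k : ℕ → ℕ) (X : ℕ → ℕ → Ω → ℝ)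
    (hmeas : ∀ n i, Measurable (X n i))
    (hindep : ∀ n, iIndepFun (m := fun _ => Real.measurableSpace)
      (fun i : Fin (k n + 1) => X n i) ℙ)
    (τ : ℝ) (hτ : 0 < τ)
    (h1 : Tendsto (fun n => ∑ i ∈ Finset.range (k n + 1),
      ∫ ω, (if |X n i ω| ≤ τ then X n i ω else 0) ∂ℙ) atTop (nhds 1))
    (h2 : Tendsto (fun n => ∑ i ∈ Finset.range (k n + 1),
      ((ℙ {ω | τ < |X n i ω|}).toReal +
        variance (fun ω => if |X n i ω| ≤ τ then X n i ω else 0) ℙ)) atTop (nhds 0)) :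
    TendstoInMeasure ℙ (fun n ω => ∑ i ∈ Finset.range (k n + 1), X n i ω) atTop
      (fun _ => (1 : ℝ)) :=
  stmt4_general k X hmeas hindep τ h1 h2
end

section
/- Let X be a centered random variable with E X² = 1 and suppose t₀ > 0 satisfies E[X²·1_{|X|≤1/t₀}] ≥ 1/2. Then for all 0 < t ≤ t₀, |E[X·1_{|X|≤1/t}]| ≤ C·((1/t)·P(|X| > 1/t) + t·Var(X·1_{|X|≤1/t})) with C = max(2, 2t₀²). -/
/-!
Truncate `X` at level `c = 1/t`: `Y = X·1_{|X|≤c}`. Since `E X = 0`, `E Y` is minus the mean of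
the tail `X·1_{|X|>c}`, on which `|X| ≤ t X²`; hence `|E Y| ≤ t (1 - E Y²)`. Cauchy–Schwarz on
the tail gives `(E Y)² ≤ P(|X| > c) (1 - E Y²) ≤ P(|X| > c) / 2`, so
`1 - E Y² ≤ 1/2 ≤ Var Y + P(|X| > c) / 2` and `|E Y| ≤ t (Var Y + P(|X| > c) / 2)`; finally
`t² ≤ t₀²` absorbs the factor `t` in front of the probability.
-/

open MeasureTheory ProbabilityTheory

section

variable {Ω : Type*} [MeasurableSpace Ω] {μ : Measure Ω}

theorem sq_integral_le_measureReal_univ_mul_integral_sq [IsFiniteMeasure μ] {f : Ω → ℝ}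
    (hf : MemLp f 2 μ) : (∫ ω, f ω ∂μ) ^ 2 ≤ μ.real Set.univ * ∫ ω, f ω ^ 2 ∂μ := by
  have hf1 : Integrable f μ := hf.integrable one_le_two
  have hf2 : Integrable (fun ω => f ω ^ 2) μ := hf.integrable_sq
  have hquad : ∀ x : ℝ, 0 ≤ μ.real Set.univ * (x * x) + (-2 * ∫ ω, f ω ∂μ) * x
      + ∫ ω, f ω ^ 2 ∂μ := fun x => by
    have hexpand : ∫ ω, (f ω - x) ^ 2 ∂μ
        = μ.real Set.univ * (x * x) + (-2 * ∫ ω, f ω ∂μ) * x + ∫ ω, f ω ^ 2 ∂μ := by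
      have hf1' : Integrable (fun ω => 2 * f ω * x) μ := (hf1.const_mul 2).mul_const x
      have hdiff : Integrable (fun ω => f ω ^ 2 - 2 * f ω * x) μ := hf2.sub hf1'
      simp_rw [sub_sq]
      rw [integral_add hdiff (integrable_const _), integral_sub hf2 hf1', integral_mul_const,
        integral_const_mul, integral_const, smul_eq_mul]
      ring
    exact hexpand ▸ integral_nonneg fun ω => sq_nonneg _
  have hdisc := discrim_le_zero hquad
  rw [discrim] at hdisc
  linarith

theorem sq_setIntegral_le_measureReal_mul_setIntegral_sq [IsFiniteMeasure μ] {f : Ω → ℝ}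
    (hf : MemLp f 2 μ) (s : Set Ω) :
    (∫ ω in s, f ω ∂μ) ^ 2 ≤ μ.real s * ∫ ω in s, f ω ^ 2 ∂μ := by
  simpa using sq_integral_le_measureReal_univ_mul_integral_sq (hf.restrict s)

theorem abs_setIntegral_le_inv_mul_setIntegral_sq {f : Ω → ℝ} {s : Set Ω} {c : ℝ}
    (hs : MeasurableSet s) (hc : 0 < c) (hcf : ∀ ω ∈ s, c ≤ |f ω|)
    (hf : IntegrableOn f s μ) (hf2 : IntegrableOn (fun ω => f ω ^ 2) s μ) :
    |∫ ω in s, f ω ∂μ| ≤ c⁻¹ * ∫ ω in s, f ω ^ 2 ∂μ := by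
  rw [← integral_const_mul]
  refine (abs_integral_le_integral_abs).trans (setIntegral_mono_on hf.abs (hf2.const_mul _) hs
    fun ω hω => ?_)
  rw [← sq_abs, le_inv_mul_iff₀ hc, sq]
  exact mul_le_mul_of_nonneg_right (hcf ω hω) (abs_nonneg _)

theorem abs_setIntegral_truncation_le [IsProbabilityMeasure μ] {X : Ω → ℝ} (hmeas : Measurable X)
    (hL2 : MemLp X 2 μ) (hcent : ∫ ω, X ω ∂μ = 0) (hvar : ∫ ω, X ω ^ 2 ∂μ = 1) {c : ℝ}
    (hc : 0 < c) (htrunc : 1 / 2 ≤ ∫ ω in {ω | |X ω| ≤ c}, X ω ^ 2 ∂μ) :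
    |∫ ω in {ω | |X ω| ≤ c}, X ω ∂μ| ≤
      c⁻¹ * (Var[{ω | |X ω| ≤ c}.indicator X; μ] + μ.real {ω | c < |X ω|} / 2) := by
  set T := {ω | |X ω| ≤ c}
  have hT : MeasurableSet T := measurableSet_le hmeas.abs measurable_const
  have hTc : Tᶜ = {ω | c < |X ω|} := by ext; simp [T]
  have hX : Integrable X μ := hL2.integrable one_le_two
  have hX2 : Integrable (fun ω => X ω ^ 2) μ := hL2.integrable_sq
  set m := ∫ ω in T, X ω ∂μ
  set s := ∫ ω in T, X ω ^ 2 ∂μ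
  set p := μ.real Tᶜ
  have htail_mean : ∫ ω in Tᶜ, X ω ∂μ = -m := by linarith [integral_add_compl hT hX]
  have htail_sq : ∫ ω in Tᶜ, X ω ^ 2 ∂μ = 1 - s := by linarith [integral_add_compl hT hX2]
  have hvarY : Var[T.indicator X; μ] = s - m ^ 2 := by
    have hsq : T.indicator X ^ 2 = T.indicator (fun ω => X ω ^ 2) := by
      ext ω
      by_cases hω : ω ∈ T <;> simp [hω]
    rw [variance_eq_sub (hL2.indicator hT), hsq, integral_indicator hT, integral_indicator hT]
  have hmarkov : |m| ≤ c⁻¹ * (1 - s) := by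
    rw [← abs_neg, ← htail_mean, ← htail_sq]
    exact abs_setIntegral_le_inv_mul_setIntegral_sq hT.compl hc
      (fun ω hω => le_of_lt (by simpa [T] using hω)) hX.integrableOn hX2.integrableOn
  have hcs : m ^ 2 ≤ p * (1 - s) := by
    rw [← neg_sq, ← htail_mean, ← htail_sq]
    exact sq_setIntegral_le_measureReal_mul_setIntegral_sq hL2 Tᶜ
  have hp : 0 ≤ p := measureReal_nonneg
  rw [← hTc, hvarY]
  calc |m| ≤ c⁻¹ * (1 - s) := hmarkov
    _ ≤ c⁻¹ * (s - m ^ 2 + p / 2) := by gcongr; nlinarith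

end

theorem stmt6_general {Ω : Type*} [MeasureSpace Ω] [IsProbabilityMeasure (ℙ : Measure Ω)]
    (X : Ω → ℝ) (hmeas : Measurable X) (hL2 : MemLp X 2 ℙ)
    (hcent : ∫ ω, X ω ∂ℙ = 0) (hvar : ∫ ω, (X ω) ^ 2 ∂ℙ = 1)
    (t₀ : ℝ)
    (htrunc : (1 / 2 : ℝ) ≤ ∫ ω, (if |X ω| ≤ 1 / t₀ then (X ω) ^ 2 else 0) ∂ℙ) :
    ∀ t : ℝ, 0 < t → t ≤ t₀ →
      |∫ ω, (if |X ω| ≤ 1 / t then X ω else 0) ∂ℙ| ≤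
        max 2 (2 * t₀ ^ 2) *
          ((1 / t) * (ℙ {ω | 1 / t < |X ω|}).toReal +
            t * variance (fun ω => if |X ω| ≤ 1 / t then X ω else 0) ℙ) := by
  intro t ht htt₀
  have hmeasT {c : ℝ} : MeasurableSet {ω | |X ω| ≤ c} :=
    measurableSet_le hmeas.abs measurable_const
  have hite {c : ℝ} {f : Ω → ℝ} :
      (fun ω => if |X ω| ≤ c then f ω else 0) = {ω | |X ω| ≤ c}.indicator f := by
    ext ω; simp [Set.indicator_apply]
  have hs : 1 / 2 ≤ ∫ ω in {ω | |X ω| ≤ 1 / t}, X ω ^ 2 ∂ℙ := by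
    rw [hite, integral_indicator hmeasT] at htrunc
    refine htrunc.trans (setIntegral_mono_set hL2.integrable_sq.integrableOn
      (ae_of_all _ fun ω => sq_nonneg _) (ae_of_all _ fun ω hω => ?_))
    exact hω.trans (one_div_le_one_div_of_le ht htt₀)
  have key := abs_setIntegral_truncation_le hmeas hL2 hcent hvar (one_div_pos.2 ht) hs
  rw [inv_div, div_one] at key
  set V := Var[{ω | |X ω| ≤ 1 / t}.indicator X; ℙ]
  set p := (ℙ : Measure Ω).real {ω | 1 / t < |X ω|}
  have hC1 : 1 ≤ max 2 (2 * t₀ ^ 2) := le_max_of_le_left one_le_two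
  have hC2 : t ^ 2 / 2 ≤ max 2 (2 * t₀ ^ 2) := le_max_of_le_right (by nlinarith)
  have hV : 0 ≤ t * V := mul_nonneg ht.le (variance_nonneg _ _)
  have hp : 0 ≤ 1 / t * p := mul_nonneg (one_div_pos.2 ht).le measureReal_nonneg
  rw [hite, integral_indicator hmeasT, ← measureReal_def]
  calc |∫ ω in {ω | |X ω| ≤ 1 / t}, X ω| ≤ t * (V + p / 2) := key
    _ = t ^ 2 / 2 * (1 / t * p) + 1 * (t * V) := by field_simp; ring
    _ ≤ max 2 (2 * t₀ ^ 2) * (1 / t * p) + max 2 (2 * t₀ ^ 2) * (t * V) := by gcongr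
    _ = _ := by ring

/-- If `X` is centered with `E X² = 1` and `E[X² 1_{|X|≤1/t₀}] ≥ 1/2` for some `t₀ > 0`,
then for all `0 < t ≤ t₀`,
`|E[X 1_{|X|≤1/t}]| ≤ C ((1/t) P(|X| > 1/t) + t Var(X 1_{|X|≤1/t}))` with `C = max 2 (2 t₀²)`. -/
theorem stmt6 {Ω : Type*} [MeasureSpace Ω] [IsProbabilityMeasure (ℙ : Measure Ω)]
    (X : Ω → ℝ) (hmeas : Measurable X) (hL2 : MemLp X 2 ℙ)
    (hcent : ∫ ω, X ω ∂ℙ = 0) (hvar : ∫ ω, (X ω) ^ 2 ∂ℙ = 1)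
    (t₀ : ℝ) (ht₀ : 0 < t₀)
    (htrunc : (1 / 2 : ℝ) ≤ ∫ ω, (if |X ω| ≤ 1 / t₀ then (X ω) ^ 2 else 0) ∂ℙ) :
    ∀ t : ℝ, 0 < t → t ≤ t₀ →
      |∫ ω, (if |X ω| ≤ 1 / t then X ω else 0) ∂ℙ| ≤
        max 2 (2 * t₀ ^ 2) *
          ((1 / t) * (ℙ {ω | 1 / t < |X ω|}).toReal +
            t * variance (fun ω => if |X ω| ≤ 1 / t then X ω else 0) ℙ) :=
  stmt6_general X hmeas hL2 hcent hvar t₀ htrunc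
end

section
/- Let p_n ∈ (0,1) and let X_n be independent with P(X_n = (1−p_n)/√(p_n(1−p_n))) = p_n and P(X_n = −p_n/√(p_n(1−p_n))) = 1−p_n. Suppose (k_n) is an increasing sequence with ∑_n (1−p_{k_n}) < ∞. Set Z_n = 1 − (√(p_{k_n}(1−p_{k_n}))/(1−p_{k_n}))·X_{k_n}. Then Z_n → 0 almost surely, while the linear part Z_{n,1} = −(√(p_{k_n}(1−p_{k_n}))/(1−p_{k_n}))·X_{k_n} → −1 almost surely. -/
open MeasureTheory ProbabilityTheory Filter
open scoped ENNReal

/-!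
By Borel–Cantelli, `∑ P(X_{kₙ} ≠ (1−p_{kₙ})/√(p_{kₙ}(1−p_{kₙ}))) = ∑ (1−p_{kₙ}) < ∞` forces
`X_{kₙ}` to take its upper value for all large `n`, almost surely. At that value the linear part
is exactly `−1`, so both sequences are eventually constant.
-/

section BorelCantelli

variable {Ω : Type*} [MeasurableSpace Ω] {μ : Measure Ω} [IsProbabilityMeasure μ]

lemma measure_ne_eq_ofReal_one_sub {Y : Ω → ℝ} (hY : Measurable Y) {c q : ℝ} (hq : 0 ≤ q)
    (hlaw : μ {ω | Y ω = c} = ENNReal.ofReal q) :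
    μ {ω | Y ω ≠ c} = ENNReal.ofReal (1 - q) := by
  have hc : MeasurableSet {ω | Y ω = c} := hY (measurableSet_singleton c)
  rw [← Set.compl_ofPred, prob_compl_eq_one_sub hc, hlaw, ENNReal.ofReal_sub 1 hq,
    ENNReal.ofReal_one]

lemma ae_eventually_eq_of_summable_one_sub {Y : ℕ → Ω → ℝ} (hY : ∀ n, Measurable (Y n))
    {c q : ℕ → ℝ} (hq : ∀ n, 0 ≤ q n) (hlaw : ∀ n, μ {ω | Y n ω = c n} = ENNReal.ofReal (q n))
    (hsum : Summable fun n => 1 - q n) :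
    ∀ᵐ ω ∂μ, ∀ᶠ n in atTop, Y n ω = c n := by
  have hbad : ∑' n, μ {ω | Y n ω ≠ c n} ≠ ∞ := by
    simpa only [measure_ne_eq_ofReal_one_sub (hY _) (hq _) (hlaw _)] using hsum.tsum_ofReal_ne_top
  filter_upwards [ae_eventually_notMem hbad] with ω hω
  filter_upwards [hω] with n hn
  simpa using hn

end BorelCantelli

lemma sqrt_mul_one_sub_div_mul_one_sub_div_sqrt {q : ℝ} (hq : q ∈ Set.Ioo 0 1) :
    Real.sqrt (q * (1 - q)) / (1 - q) * ((1 - q) / Real.sqrt (q * (1 - q))) = 1 := by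
  obtain ⟨hq0, hq1⟩ := hq
  have : 0 < Real.sqrt (q * (1 - q)) := Real.sqrt_pos.mpr (by nlinarith)
  field_simp [sub_ne_zero.mpr hq1.ne']

theorem stmt9_general {Ω : Type*} [MeasureSpace Ω] [IsProbabilityMeasure (ℙ : Measure Ω)]
    (p : ℕ → ℝ) (hp : ∀ n, p n ∈ Set.Ioo (0 : ℝ) 1)
    (X : ℕ → Ω → ℝ) (hmeas : ∀ n, Measurable (X n))
    (hlaw1 : ∀ n, ℙ {ω | X n ω = (1 - p n) / Real.sqrt (p n * (1 - p n))}
      = ENNReal.ofReal (p n))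
    (k : ℕ → ℕ)
    (hsum : Summable (fun n => 1 - p (k n))) :
    (∀ᵐ ω ∂ℙ, Tendsto
      (fun n => 1 - (Real.sqrt (p (k n) * (1 - p (k n))) / (1 - p (k n))) * X (k n) ω)
      atTop (nhds 0)) ∧
    (∀ᵐ ω ∂ℙ, Tendsto
      (fun n => -(Real.sqrt (p (k n) * (1 - p (k n))) / (1 - p (k n))) * X (k n) ω)
      atTop (nhds (-1))) := by
  have hupper : ∀ᵐ ω ∂ℙ, ∀ᶠ n in atTop,
      Real.sqrt (p (k n) * (1 - p (k n))) / (1 - p (k n)) * X (k n) ω = 1 := by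
    filter_upwards [ae_eventually_eq_of_summable_one_sub (fun n => hmeas (k n))
      (fun n => (hp (k n)).1.le) (fun n => hlaw1 (k n)) hsum] with ω hω
    filter_upwards [hω] with n hn
    rw [hn, sqrt_mul_one_sub_div_mul_one_sub_div_sqrt (hp (k n))]
  refine ⟨?_, ?_⟩ <;> filter_upwards [hupper] with ω hω <;>
    refine tendsto_const_nhds.congr' ?_ <;> filter_upwards [hω] with n hn
  · rw [hn, sub_self]
  · rw [neg_mul, hn]

/-- Independent two-point variables `Xₙ` with `P(Xₙ = (1−pₙ)/√(pₙ(1−pₙ))) = pₙ`,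
`P(Xₙ = −pₙ/√(pₙ(1−pₙ))) = 1−pₙ`, and `(kₙ)` increasing with `∑ (1−p_{kₙ}) < ∞`.
Then `Zₙ = 1 − (√(p_{kₙ}(1−p_{kₙ}))/(1−p_{kₙ})) X_{kₙ} → 0` a.s. while the linear part
tends to `−1` a.s. -/
theorem stmt9 {Ω : Type*} [MeasureSpace Ω] [IsProbabilityMeasure (ℙ : Measure Ω)]
    (p : ℕ → ℝ) (hp : ∀ n, p n ∈ Set.Ioo (0 : ℝ) 1)
    (X : ℕ → Ω → ℝ) (hmeas : ∀ n, Measurable (X n))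
    (hindep : iIndepFun X ℙ)
    (hlaw1 : ∀ n, ℙ {ω | X n ω = (1 - p n) / Real.sqrt (p n * (1 - p n))}
      = ENNReal.ofReal (p n))
    (hlaw2 : ∀ n, ℙ {ω | X n ω = -(p n) / Real.sqrt (p n * (1 - p n))}
      = ENNReal.ofReal (1 - p n))
    (k : ℕ → ℕ) (hk : StrictMono k)
    (hsum : Summable (fun n => 1 - p (k n))) :
    (∀ᵐ ω ∂ℙ, Tendsto
      (fun n => 1 - (Real.sqrt (p (k n) * (1 - p (k n))) / (1 - p (k n))) * X (k n) ω)
      atTop (nhds 0)) ∧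
    (∀ᵐ ω ∂ℙ, Tendsto
      (fun n => -(Real.sqrt (p (k n) * (1 - p (k n))) / (1 - p (k n))) * X (k n) ω)
      atTop (nhds (-1))) :=
  stmt9_general p hp X hmeas hlaw1 k hsum
end

section
/- Let X, X' be i.i.d. real random variables and δ > 0 such that sup_{x∈ℝ} P(|X| ∈ (x−δ, x+δ)) ≤ 1−δ. Then P(|X − X'| ≥ δ) ≥ δ. -/
open MeasureTheory ProbabilityTheory Set
open scoped ENNReal

/-!
Since `|x - y| < δ` forces `|x| ∈ (|y| - δ, |y| + δ)`, conditioning on `X'` (independence and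
Fubini) bounds `P(|X - X'| < δ)` by `1 - δ`, and passing to the complement gives the claim.
The truncation of `ENNReal.ofReal` makes that last step need `δ ≤ 1`, which the anti-concentration
hypothesis itself forces: for `δ > 1` every window would be null, yet windows around a point of the
support of the law of `|X|` have positive mass.
-/

lemma le_one_of_forall_measure_Ioo_le (μ : Measure ℝ) [IsProbabilityMeasure μ] {δ : ℝ}
    (h : ∀ x, μ (Ioo (x - δ) (x + δ)) ≤ ENNReal.ofReal (1 - δ)) : δ ≤ 1 := by
  by_contra! hδ
  obtain ⟨x, hx⟩ := Measure.nonempty_support (IsProbabilityMeasure.ne_zero μ)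
  have hpos := (Measure.mem_support_iff_forall x).1 hx _
    (Ioo_mem_nhds (by linarith : x - δ < x) (by linarith : x < x + δ))
  have hnull := h x
  rw [ENNReal.ofReal_of_nonpos (by linarith)] at hnull
  exact hpos.ne' (le_zero_iff.1 hnull)

lemma ProbabilityTheory.IndepFun.measure_prodMk_mem_le {Ω α β : Type*} [MeasurableSpace Ω]
    [MeasurableSpace α] [MeasurableSpace β] {μ : Measure Ω} [IsProbabilityMeasure μ]
    {X : Ω → α} {Y : Ω → β} (hX : Measurable X) (hY : Measurable Y) (hXY : IndepFun X Y μ)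
    {S : Set (α × β)} (hS : MeasurableSet S) {c : ℝ≥0∞}
    (hc : ∀ y, μ {ω | (X ω, y) ∈ S} ≤ c) :
    μ {ω | (X ω, Y ω) ∈ S} ≤ c := by
  have : IsProbabilityMeasure (μ.map Y) := Measure.isProbabilityMeasure_map hY.aemeasurable
  calc μ {ω | (X ω, Y ω) ∈ S}
      = (μ.map X).prod (μ.map Y) S := by
        rw [← (indepFun_iff_map_prod_eq_prod_map_map hX.aemeasurable hY.aemeasurable).1 hXY,
          Measure.map_apply (hX.prodMk hY) hS]
        rfl
    _ = ∫⁻ y, μ.map X ((fun x ↦ (x, y)) ⁻¹' S) ∂μ.map Y := Measure.prod_apply_symm hS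
    _ ≤ ∫⁻ _, c ∂μ.map Y := lintegral_mono fun y ↦ by
        rw [Measure.map_apply hX (measurable_prodMk_right hS)]
        exact hc y
    _ = c := by simp

lemma measurableSet_abs_fst_mem_Ioo (δ : ℝ) :
    MeasurableSet {p : ℝ × ℝ | |p.1| ∈ Ioo (|p.2| - δ) (|p.2| + δ)} :=
  (measurableSet_lt (measurable_snd.abs.sub_const δ) measurable_fst.abs).inter
    (measurableSet_lt measurable_fst.abs (measurable_snd.abs.add_const δ))

lemma abs_mem_Ioo_of_abs_sub_lt {x y δ : ℝ} (h : |x - y| < δ) :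
    |x| ∈ Ioo (|y| - δ) (|y| + δ) := by
  have := abs_lt.1 ((abs_abs_sub_abs_le_abs_sub x y).trans_lt h)
  constructor <;> linarith [this.1, this.2]

lemma ofReal_le_one_sub_ofReal_one_sub {δ : ℝ} (hδ : δ ≤ 1) :
    ENNReal.ofReal δ ≤ 1 - ENNReal.ofReal (1 - δ) := by
  rw [← ENNReal.ofReal_one, ← ENNReal.ofReal_sub _ (sub_nonneg.2 hδ), sub_sub_cancel]

theorem stmt10_general {Ω : Type*} [MeasureSpace Ω] [IsProbabilityMeasure (ℙ : Measure Ω)]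
    (X X' : Ω → ℝ) (hmeas : Measurable X) (hmeas' : Measurable X')
    (hindep : IndepFun X X' ℙ)
    (δ : ℝ)
    (hanti : ∀ x : ℝ, ℙ {ω | |X ω| ∈ Set.Ioo (x - δ) (x + δ)} ≤ ENNReal.ofReal (1 - δ)) :
    ENNReal.ofReal δ ≤ ℙ {ω | δ ≤ |X ω - X' ω|} := by
  have : IsProbabilityMeasure (Measure.map (fun ω ↦ |X ω|) ℙ) :=
    Measure.isProbabilityMeasure_map hmeas.abs.aemeasurable
  have hδ : δ ≤ 1 := le_one_of_forall_measure_Ioo_le (Measure.map (fun ω ↦ |X ω|) ℙ) fun x ↦ by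
    rw [Measure.map_apply hmeas.abs measurableSet_Ioo]
    exact hanti x
  have hclose : ℙ {ω | |X ω - X' ω| < δ} ≤ ENNReal.ofReal (1 - δ) :=
    calc ℙ {ω | |X ω - X' ω| < δ}
        ≤ ℙ {ω | (X ω, X' ω) ∈ {p : ℝ × ℝ | |p.1| ∈ Ioo (|p.2| - δ) (|p.2| + δ)}} :=
          measure_mono fun _ ↦ abs_mem_Ioo_of_abs_sub_lt
      _ ≤ ENNReal.ofReal (1 - δ) :=
          hindep.measure_prodMk_mem_le hmeas hmeas' (measurableSet_abs_fst_mem_Ioo δ)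
            fun y ↦ hanti |y|
  have hfar : {ω | δ ≤ |X ω - X' ω|} = {ω | |X ω - X' ω| < δ}ᶜ := by
    ext; simp [not_lt]
  have hmeasclose : MeasurableSet {ω | |X ω - X' ω| < δ} :=
    measurableSet_lt (hmeas.sub hmeas').abs measurable_const
  rw [hfar, prob_compl_eq_one_sub hmeasclose]
  exact (ofReal_le_one_sub_ofReal_one_sub hδ).trans (tsub_le_tsub_left hclose 1)

/-- If `X, X'` are i.i.d. and `sup_x P(|X| ∈ (x−δ, x+δ)) ≤ 1−δ`, then
`P(|X − X'| ≥ δ) ≥ δ`. -/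
theorem stmt10 {Ω : Type*} [MeasureSpace Ω] [IsProbabilityMeasure (ℙ : Measure Ω)]
    (X X' : Ω → ℝ) (hmeas : Measurable X) (hmeas' : Measurable X')
    (hindep : IndepFun X X' ℙ)
    (hiid : Measure.map X' ℙ = Measure.map X ℙ)
    (δ : ℝ) (hδ : 0 < δ)
    (hanti : ∀ x : ℝ, ℙ {ω | |X ω| ∈ Set.Ioo (x - δ) (x + δ)} ≤ ENNReal.ofReal (1 - δ)) :
    ENNReal.ofReal δ ≤ ℙ {ω | δ ≤ |X ω - X' ω|} :=
  stmt10_general X X' hmeas hmeas' hindep δ hanti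
end

section
/- Let X be a real random variable. If X is not almost surely constant, then there exists δ > 0 such that sup_{x∈ℝ} P(X ∈ (x−δ, x+δ)) ≤ 1 − δ. -/
open MeasureTheory ProbabilityTheory Filter
open scoped ENNReal

/-- If a real random variable `X` is not almost surely constant, then there exists `δ > 0`
such that `P(X ∈ (x−δ, x+δ)) ≤ 1 − δ` for every `x ∈ ℝ`. -/
theorem stmt17 {Ω : Type*} [MeasureSpace Ω] [IsProbabilityMeasure (ℙ : Measure Ω)]
    (X : Ω → ℝ) (hmeas : Measurable X)
    (hne : ¬ ∃ c : ℝ, ∀ᵐ ω ∂ℙ, X ω = c) :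
    ∃ δ : ℝ, 0 < δ ∧ ∀ x : ℝ,
      ℙ {ω | X ω ∈ Set.Ioo (x - δ) (x + δ)} ≤ ENNReal.ofReal (1 - δ) := by
  by_contra hcon
  push_neg at hcon
  apply hne
  set δ : ℕ → ℝ := fun n => 1 / (n + 2) with hδdef
  have hδpos : ∀ n : ℕ, 0 < δ n := by intro n; positivity
  choose x hx using fun n : ℕ => hcon (δ n) (hδpos n)
  have hδanti : ∀ {n N : ℕ}, N ≤ n → δ n ≤ δ N := by
    intro n N h
    simp only [hδdef]
    gcongr
  have hδhalf : ∀ n : ℕ, δ n ≤ 1 / 2 := by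
    intro n
    calc δ n ≤ δ 0 := hδanti (Nat.zero_le n)
    _ = 1 / 2 := by norm_num [hδdef]
  have hδ0 : Tendsto δ atTop (nhds 0) := by
    apply squeeze_zero (fun n => le_of_lt (hδpos n))
      (fun n => ?_) tendsto_one_div_add_atTop_nhds_zero_nat
    simp only [hδdef]
    gcongr
    linarith [Nat.cast_nonneg (α := ℝ) n]
  -- each pair of intervals intersects
  have hdist : ∀ n m : ℕ, |x n - x m| < δ n + δ m := by
    intro n m
    by_contra hd
    push_neg at hd
    set A := X ⁻¹' Set.Ioo (x n - δ n) (x n + δ n) with hA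
    set B := X ⁻¹' Set.Ioo (x m - δ m) (x m + δ m) with hB
    have hdisj : Disjoint A B := by
      rw [Set.disjoint_left]
      rintro ω ⟨h1, h2⟩ ⟨h3, h4⟩
      rw [le_abs] at hd
      rcases hd with hd | hd <;> linarith
    have hunion : ℙ (A ∪ B) = ℙ A + ℙ B :=
      measure_union hdisj (hmeas measurableSet_Ioo)
    have h1 : ENNReal.ofReal (1 - δ n) < ℙ A := hx n
    have h2 : ENNReal.ofReal (1 - δ m) < ℙ B := hx m
    have hlt : (1 : ℝ≥0∞) < ℙ (A ∪ B) := by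
      rw [hunion]
      calc (1 : ℝ≥0∞) ≤ ENNReal.ofReal (1 - δ n) + ENNReal.ofReal (1 - δ m) := by
            rw [← ENNReal.ofReal_add (by linarith [hδhalf n]) (by linarith [hδhalf m])]
            rw [← ENNReal.ofReal_one]
            apply ENNReal.ofReal_le_ofReal
            linarith [hδhalf n, hδhalf m]
        _ < ℙ A + ℙ B := ENNReal.add_lt_add h1 h2
    exact absurd (prob_le_one (μ := ℙ) (s := A ∪ B)) (not_le.mpr hlt)
  -- x is Cauchy
  have hcauchy : CauchySeq x := by
    apply cauchySeq_of_le_tendsto_0 (fun N => 2 * δ N)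
    · intro n m N hn hm
      have h1 := hδanti hn
      have h2 := hδanti hm
      have := hdist n m
      rw [Real.dist_eq]
      linarith
    · simpa only [mul_zero] using hδ0.const_mul (2 : ℝ)
  obtain ⟨c, hc⟩ := cauchySeq_tendsto_of_complete hcauchy
  -- every interval around c has full measure
  have hfull : ∀ ε : ℝ, 0 < ε → ℙ (X ⁻¹' Set.Ioo (c - ε) (c + ε)) = 1 := by
    intro ε hε
    refine le_antisymm prob_le_one ?_
    have h1 : ∀ᶠ n in atTop, |x n - c| < ε / 2 := by
      have := (tendsto_iff_dist_tendsto_zero.mp hc).eventually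
        (eventually_lt_nhds (show (0:ℝ) < ε / 2 by linarith))
      simpa [Real.dist_eq] using this
    have h2 : ∀ᶠ n in atTop, δ n < ε / 2 :=
      hδ0.eventually (eventually_lt_nhds (show (0:ℝ) < ε / 2 by linarith))
    have hev : ∀ᶠ n in atTop,
        ENNReal.ofReal (1 - δ n) ≤ ℙ (X ⁻¹' Set.Ioo (c - ε) (c + ε)) := by
      filter_upwards [h1, h2] with n hn1 hn2
      refine le_trans (le_of_lt (hx n)) (measure_mono ?_)
      intro ω hω
      simp only [Set.mem_preimage, Set.mem_Ioo] at hω ⊢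
      rw [abs_lt] at hn1
      constructor <;> [linarith [hω.1]; linarith [hω.2]]
    have htend : Tendsto (fun n => ENNReal.ofReal (1 - δ n)) atTop (nhds 1) := by
      have : Tendsto (fun n => 1 - δ n) atTop (nhds 1) := by
        simpa using tendsto_const_nhds.sub hδ0
      simpa [Function.comp_def] using (ENNReal.continuous_ofReal.tendsto 1).comp this
    exact le_of_tendsto htend hev
  refine ⟨c, ?_⟩
  rw [ae_iff]
  have hsub : {ω | ¬ X ω = c} ⊆ ⋃ n : ℕ, (X ⁻¹' Set.Ioo (c - δ n) (c + δ n))ᶜ := by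
    intro ω hω
    have hpos : 0 < |X ω - c| := abs_pos.mpr (sub_ne_zero.mpr hω)
    obtain ⟨n, hn⟩ := (hδ0.eventually (eventually_lt_nhds hpos)).exists
    refine Set.mem_iUnion.mpr ⟨n, ?_⟩
    simp only [Set.mem_compl_iff, Set.mem_preimage, Set.mem_Ioo, not_and, not_lt]
    intro h1
    by_contra h2
    push_neg at h2
    have : |X ω - c| < δ n := abs_lt.mpr ⟨by linarith, by linarith⟩
    linarith
  refine measure_mono_null hsub (measure_iUnion_null fun n => ?_)
  rw [measure_compl (hmeas measurableSet_Ioo) (measure_ne_top _ _),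
    hfull (δ n) (hδpos n), measure_univ, tsub_self]
end
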